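/- Let d ≥ 1, let ν be an admissible measure on ℝ^d, and let u ∈ L^1(ℝ^d). For t ∈ ℝ set S_t(u) = {x ∈ ℝ^d : u(x) > t}. Then the co-area formula F_ν(u) = ∫_ℝ Per_ν(S_t(u)) dt holds, where both sides are values in [0,∞]. -/
import Mathlib


open MeasureTheory Filter Topology ENNReal

/-- The non-local `ν`-perimeter: `Per_ν(E) = ∫_E ν(Eᶜ − x) dx`. -/
noncomputable def nuPer {d : ℕ} (ν : Measure (EuclideanSpace ℝ (Fin d)))
    (E : Set (EuclideanSpace ℝ (Fin d))) : ℝ≥0∞ :=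
  ∫⁻ x in E, ν {y | x + y ∈ Eᶜ}

/-- `F_ν(u) = (1/2) ∫_{ℝ^d} ∫_{ℝ^d} |u(x+y) − u(y)| ν(dx) dy`. -/
noncomputable def Fnu {d : ℕ} (ν : Measure (EuclideanSpace ℝ (Fin d)))
    (u : EuclideanSpace ℝ (Fin d) → ℝ) : ℝ≥0∞ :=
  (1 / 2 : ℝ≥0∞) * ∫⁻ y, ∫⁻ x, ENNReal.ofReal |u (x + y) - u y| ∂ν


lemma aux_sigmaFinite {d : ℕ} (ν : Measure (EuclideanSpace ℝ (Fin d)))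
    (hν0 : ν {0} = 0)
    (hν1 : (∫⁻ x, ENNReal.ofReal (min 1 ‖x‖) ∂ν) < ⊤) : SigmaFinite ν := by
  refine ⟨⟨⟨fun n => {x | 1/(n+1:ℝ) ≤ ‖x‖} ∪ {0}, fun _ => trivial, ?_, ?_⟩⟩⟩
  · intro n
    have hε : (0:ℝ) < min 1 (1/(n+1:ℝ)) := lt_min one_pos (by positivity)
    have hfm : AEMeasurable (fun x : EuclideanSpace ℝ (Fin d) =>
        ENNReal.ofReal (min 1 ‖x‖)) ν :=
      ((continuous_const.min continuous_norm).measurable.ennreal_ofReal).aemeasurable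
    have hmark := mul_meas_ge_le_lintegral₀ hfm (ENNReal.ofReal (min 1 (1/(n+1:ℝ))))
    have hsub : {x : EuclideanSpace ℝ (Fin d) | 1/(n+1:ℝ) ≤ ‖x‖} ⊆
        {x | ENNReal.ofReal (min 1 (1/(n+1:ℝ))) ≤ ENNReal.ofReal (min 1 ‖x‖)} :=
      fun x hx => ENNReal.ofReal_le_ofReal (min_le_min le_rfl hx)
    have hlt : ν {x : EuclideanSpace ℝ (Fin d) | 1/(n+1:ℝ) ≤ ‖x‖} < ⊤ := by
      by_contra h
      push_neg at h
      have htop : ν {x : EuclideanSpace ℝ (Fin d) | 1/(n+1:ℝ) ≤ ‖x‖} = ⊤ := top_le_iff.mp h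
      have h1 : ν {x | ENNReal.ofReal (min 1 (1/(n+1:ℝ))) ≤ ENNReal.ofReal (min 1 ‖x‖)} = ⊤ :=
        top_le_iff.mp (htop ▸ measure_mono hsub)
      rw [h1, ENNReal.mul_top (by simp [ENNReal.ofReal_eq_zero, not_le, hε]; positivity)] at hmark
      exact absurd hν1 (not_lt.mpr hmark)
    calc ν ({x : EuclideanSpace ℝ (Fin d) | 1/(n+1:ℝ) ≤ ‖x‖} ∪ {0})
        ≤ ν {x | 1/(n+1:ℝ) ≤ ‖x‖} + ν {0} := measure_union_le _ _
      _ < ⊤ := by rw [hν0, add_zero]; exact hlt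
  · ext x
    simp only [Set.mem_iUnion, Set.mem_union, Set.mem_setOf_eq, Set.mem_singleton_iff,
      Set.mem_univ, iff_true]
    by_cases hx : x = 0
    · exact ⟨0, Or.inr hx⟩
    · obtain ⟨n, hn⟩ := exists_nat_one_div_lt (norm_pos_iff.mpr hx)
      exact ⟨n, Or.inl hn.le⟩

lemma aux_ofReal_abs (r : ℝ) :
    ENNReal.ofReal |r| = ENNReal.ofReal r + ENNReal.ofReal (-r) := by
  rcases le_total 0 r with h | h
  · rw [abs_of_nonneg h, ENNReal.ofReal_of_nonpos (neg_nonpos.mpr h), add_zero]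
  · rw [abs_of_nonpos h, ENNReal.ofReal_of_nonpos h, zero_add]

lemma aux_balance {α} [MeasurableSpace α] {μ : Measure α}
    {f : α → ℝ} (hf : Integrable f μ) (h0 : ∫ x, f x ∂μ = 0) :
    ∫⁻ x, ENNReal.ofReal (f x) ∂μ = ∫⁻ x, ENNReal.ofReal (-f x) ∂μ := by
  have hmax : ∀ r : ℝ, ENNReal.ofReal (max r 0) = ENNReal.ofReal r := by
    intro r
    rcases le_total r 0 with h | h
    · rw [max_eq_right h, ENNReal.ofReal_of_nonpos h, ENNReal.ofReal_zero]
    · rw [max_eq_left h]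
  have h1 := ofReal_integral_eq_lintegral_ofReal hf.pos_part
      (Eventually.of_forall fun x => le_max_right _ _)
  have h2 := ofReal_integral_eq_lintegral_ofReal hf.neg_part
      (Eventually.of_forall fun x => le_max_right _ _)
  have heq : ∫ x, max (f x) 0 ∂μ = ∫ x, max (-f x) 0 ∂μ := by
    have hs := integral_sub hf.pos_part hf.neg_part
    simp only [max_zero_sub_max_neg_zero_eq_self] at hs
    rw [h0] at hs
    linarith
  calc ∫⁻ x, ENNReal.ofReal (f x) ∂μ
      = ∫⁻ x, ENNReal.ofReal (max (f x) 0) ∂μ := by simp_rw [hmax]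
    _ = ENNReal.ofReal (∫ x, max (f x) 0 ∂μ) := h1.symm
    _ = ENNReal.ofReal (∫ x, max (-f x) 0 ∂μ) := by rw [heq]
    _ = ∫⁻ x, ENNReal.ofReal (max (-f x) 0) ∂μ := h2
    _ = ∫⁻ x, ENNReal.ofReal (-f x) ∂μ := by simp_rw [hmax]

lemma aux_perx {d : ℕ} (u : EuclideanSpace ℝ (Fin d) → ℝ)
    (hu : Integrable u) (x : EuclideanSpace ℝ (Fin d)) :
    ∫⁻ y, ENNReal.ofReal (u (x + y) - u y) = ∫⁻ y, ENNReal.ofReal (u y - u (x + y)) := by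
  have hcomp : Integrable (fun y => u (x + y)) :=
    ((measurePreserving_add_left volume x).integrable_comp hu.aestronglyMeasurable).mpr hu
  have h0 : ∫ y, (u (x + y) - u y) = 0 := by
    rw [integral_sub hcomp hu, integral_add_left_eq_self u x, sub_self]
  have := aux_balance (hcomp.sub hu) h0
  simpa [neg_sub] using this

/-- Co-area formula: for an admissible measure `ν` and `u ∈ L¹(ℝ^d)`,
`F_ν(u) = ∫_ℝ Per_ν({x : u(x) > t}) dt`. -/
theorem statement5 {d : ℕ} (hd : 1 ≤ d)
    (ν : Measure (EuclideanSpace ℝ (Fin d)))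
    (hν0 : ν {0} = 0)
    (hν1 : (∫⁻ x, ENNReal.ofReal (min 1 ‖x‖) ∂ν) < ⊤)
    (u : EuclideanSpace ℝ (Fin d) → ℝ)
    (hu : Integrable u) (humeas : Measurable u) :
    Fnu ν u = ∫⁻ t : ℝ, nuPer ν {x | t < u x} := by
  haveI : SigmaFinite ν := aux_sigmaFinite ν hν0 hν1
  -- the indicator set for the right-hand side
  set S : Set (ℝ × (EuclideanSpace ℝ (Fin d) × EuclideanSpace ℝ (Fin d))) := {p | u (p.2.1 + p.2.2) ≤ p.1 ∧ p.1 < u p.2.1} with hSdef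
  have hS : MeasurableSet S := by
    apply MeasurableSet.inter
    · exact measurableSet_le (humeas.comp ((measurable_fst.comp measurable_snd).add
        (measurable_snd.comp measurable_snd))) measurable_fst
    · exact measurableSet_lt measurable_fst (humeas.comp (measurable_fst.comp measurable_snd))
  -- Step 1: rewrite nuPer as a double integral of an indicator
  have step1 : ∀ t : ℝ, nuPer ν {x | t < u x} = ∫⁻ x, ∫⁻ y, S.indicator 1 (t, x, y) ∂ν := by
    intro t
    have hEt : MeasurableSet {x : EuclideanSpace ℝ (Fin d) | t < u x} := measurableSet_lt measurable_const humeas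
    rw [nuPer, ← lintegral_indicator hEt]
    congr 1
    funext x
    by_cases hx : t < u x
    · rw [Set.indicator_of_mem (show x ∈ {x | t < u x} from hx)]
      have hset : {y : EuclideanSpace ℝ (Fin d) | x + y ∈ {x : EuclideanSpace ℝ (Fin d) | t < u x}ᶜ} = {y | u (x + y) ≤ t} := by
        ext y; simp [not_lt]
      have hms : MeasurableSet {y : EuclideanSpace ℝ (Fin d) | u (x + y) ≤ t} :=
        measurableSet_le (humeas.comp (measurable_const_add x)) measurable_const
      rw [hset, ← lintegral_indicator_one hms]
      congr 1
      funext y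
      by_cases hy : u (x + y) ≤ t
      · rw [Set.indicator_of_mem (show y ∈ {y | u (x + y) ≤ t} from hy),
          Set.indicator_of_mem (show (t, x, y) ∈ S from ⟨hy, hx⟩)]
        rfl
      · rw [Set.indicator_of_notMem (show y ∉ {y | u (x + y) ≤ t} from hy),
          Set.indicator_of_notMem (show (t, x, y) ∉ S from fun h => hy h.1)]
    · rw [Set.indicator_of_notMem (show x ∉ {x | t < u x} from hx)]
      have hz : ∀ y : EuclideanSpace ℝ (Fin d), S.indicator (1 : ℝ × (EuclideanSpace ℝ (Fin d) × EuclideanSpace ℝ (Fin d)) → ℝ≥0∞) (t, x, y) = 0 := fun y =>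
        Set.indicator_of_notMem (show (t, x, y) ∉ S from fun h => hx h.2) _
      simp [hz]
  -- measurability of the triple indicator in various curried forms
  have hind : Measurable (S.indicator (1 : ℝ × (EuclideanSpace ℝ (Fin d) × EuclideanSpace ℝ (Fin d)) → ℝ≥0∞)) :=
    measurable_const.indicator hS
  -- Step 2: Tonelli to compute the RHS
  have step2 : ∫⁻ t : ℝ, nuPer ν {x | t < u x}
      = ∫⁻ x : EuclideanSpace ℝ (Fin d), ∫⁻ y, ENNReal.ofReal (u x - u (x + y)) ∂ν := by
    simp_rw [step1]
    rw [lintegral_lintegral_swap]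
    · congr 1; funext x
      rw [lintegral_lintegral_swap]
      · congr 1; funext y
        have : ∀ t : ℝ, S.indicator (1 : ℝ × (EuclideanSpace ℝ (Fin d) × EuclideanSpace ℝ (Fin d)) → ℝ≥0∞) (t, x, y)
            = (Set.Ico (u (x + y)) (u x)).indicator 1 t := by
          intro t
          by_cases ht : (t, x, y) ∈ S
          · rw [Set.indicator_of_mem ht, Set.indicator_of_mem (Set.mem_Ico.mpr ⟨ht.1, ht.2⟩)]
            rfl
          · rw [Set.indicator_of_notMem ht, Set.indicator_of_notMem
              (fun h => ht ⟨(Set.mem_Ico.mp h).1, (Set.mem_Ico.mp h).2⟩)]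
        simp_rw [this]
        rw [lintegral_indicator_one measurableSet_Ico, Real.volume_Ico]
      · exact (hind.comp ((measurable_fst).prodMk
          (measurable_const.prodMk measurable_snd))).aemeasurable
    · exact ((hind.comp (measurable_fst.fst.prodMk
        (measurable_fst.snd.prodMk measurable_snd))).lintegral_prod_right').aemeasurable
  rw [step2]
  -- Step 3: rewrite Fnu, splitting the absolute value
  have hmeas1 : Measurable fun p : EuclideanSpace ℝ (Fin d) × EuclideanSpace ℝ (Fin d) =>
      ENNReal.ofReal (u (p.2 + p.1) - u p.1) :=
    ((humeas.comp (measurable_snd.add measurable_fst)).sub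
      (humeas.comp measurable_fst)).ennreal_ofReal
  have hmeas2 : Measurable fun p : EuclideanSpace ℝ (Fin d) × EuclideanSpace ℝ (Fin d) =>
      ENNReal.ofReal (u p.1 - u (p.2 + p.1)) :=
    ((humeas.comp measurable_fst).sub
      (humeas.comp (measurable_snd.add measurable_fst))).ennreal_ofReal
  have split : Fnu ν u = (1/2 : ℝ≥0∞) *
      ((∫⁻ y, ∫⁻ x, ENNReal.ofReal (u (x + y) - u y) ∂ν) +
       (∫⁻ y, ∫⁻ x, ENNReal.ofReal (u y - u (x + y)) ∂ν)) := by
    rw [Fnu]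
    congr 1
    have hpt : ∀ y : EuclideanSpace ℝ (Fin d),
        (∫⁻ x, ENNReal.ofReal |u (x + y) - u y| ∂ν)
        = (∫⁻ x, ENNReal.ofReal (u (x + y) - u y) ∂ν)
          + ∫⁻ x, ENNReal.ofReal (u y - u (x + y)) ∂ν := by
      intro y
      have hA : Measurable fun x : EuclideanSpace ℝ (Fin d) =>
          ENNReal.ofReal (u (x + y) - u y) :=
        ((humeas.comp (measurable_add_const y)).sub measurable_const).ennreal_ofReal
      rw [← lintegral_add_left hA]
      congr 1
      funext x
      rw [aux_ofReal_abs, neg_sub]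
    simp_rw [hpt]
    rw [lintegral_add_left hmeas1.lintegral_prod_right']
  have hIAIB : (∫⁻ y, ∫⁻ x, ENNReal.ofReal (u (x + y) - u y) ∂ν)
      = ∫⁻ y, ∫⁻ x, ENNReal.ofReal (u y - u (x + y)) ∂ν := by
    calc (∫⁻ y, ∫⁻ x, ENNReal.ofReal (u (x + y) - u y) ∂ν)
        = ∫⁻ x, (∫⁻ y, ENNReal.ofReal (u (x + y) - u y)) ∂ν :=
          lintegral_lintegral_swap hmeas1.aemeasurable
      _ = ∫⁻ x, (∫⁻ y, ENNReal.ofReal (u y - u (x + y))) ∂ν :=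
          lintegral_congr fun x => aux_perx u hu x
      _ = ∫⁻ y, ∫⁻ x, ENNReal.ofReal (u y - u (x + y)) ∂ν :=
          (lintegral_lintegral_swap hmeas2.aemeasurable).symm
  rw [split, hIAIB, ← two_mul, ← mul_assoc]
  have h2 : (1/2 : ℝ≥0∞) * 2 = 1 := by
    rw [one_div, ENNReal.inv_mul_cancel (by norm_num) (by norm_num)]
  rw [h2, one_mul]
  exact lintegral_congr fun a => lintegral_congr fun b => by rw [add_comm]
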